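/- arXiv:2306.00094 — 2 statements merged into one kernel-verified Lean document; each statement's English description precedes it below -/
import Mathlib

section
/- Let D ⊆ ℝ^d be a measurable set, D_1, …, D_K measurable subsets of D, and γ : ℝ^d × ℝ^d → ℝ a measurable function such that for all x, y ∈ D with γ(x,y) ≠ 0 there exists k with x ∈ D_k and y ∈ D_k. Define ζ(x,y) = Σ_{k=1}^K χ_{D_k}(x) χ_{D_k}(y). Let u, v : ℝ^d → ℝ be measurable functions such that (x,y) ↦ (u(y) − u(x))(v(y) − v(x)) γ(x,y) is integrable on D × D. Then the sum of the weighted subdomain bilinear forms equals the global bilinear form: Σ_{k=1}^K ∫_{D_k} ∫_{D_k} (u(y) − u(x))(v(y) − v(x)) γ(x,y) ζ(x,y)^{-1} dy dx = ∫_D ∫_D (u(y) − u(x))(v(y) − v(x)) γ(x,y) dy dx. -/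
/-!
After passing to integrals over `D × D`, the sum over `k` of the integrand weighted by `ζ⁻¹`
and restricted to `D_k × D_k` is `ζ · ζ⁻¹` times the integrand: the integrand itself where
`ζ ≠ 0`, and where `ζ = 0` the covering hypothesis forces `γ = 0`. As `ζ(x, y)` is the number
of subdomains containing both `x` and `y`, `ζ⁻¹ ≤ 1`, so every weighted integrand is integrable
and sum and integral may be exchanged.
-/

open MeasureTheory Finset

section CoverCount

variable {α ι : Type*}

noncomputable def coverCount (I : Finset ι) (t : ι → Set α) (a : α) : ℝ :=
  ∑ i ∈ I, (t i).indicator 1 a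

open Classical in
theorem coverCount_eq_card (I : Finset ι) (t : ι → Set α) (a : α) :
    coverCount I t a = #{i ∈ I | a ∈ t i} := by
  simp only [coverCount, Set.indicator_apply, Pi.one_apply, sum_boole]

theorem coverCount_inv_le_one (I : Finset ι) (t : ι → Set α) (a : α) :
    ‖(coverCount I t a)⁻¹‖ ≤ 1 := by
  classical
  rw [coverCount_eq_card, Real.norm_of_nonneg (by positivity)]
  exact Nat.cast_inv_le_one _

theorem coverCount_ne_zero {I : Finset ι} {t : ι → Set α} {a : α} {i : ι} (hi : i ∈ I)
    (ha : a ∈ t i) : coverCount I t a ≠ 0 := by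
  classical
  rw [coverCount_eq_card, Nat.cast_ne_zero, ← pos_iff_ne_zero, card_pos]
  exact ⟨i, mem_filter.2 ⟨hi, ha⟩⟩

theorem measurable_coverCount [MeasurableSpace α] {I : Finset ι} {t : ι → Set α}
    (ht : ∀ i ∈ I, MeasurableSet (t i)) : Measurable (coverCount I t) :=
  Finset.measurable_fun_sum I fun i hi => measurable_one.indicator (ht i hi)

theorem sum_indicator_mul_inv_coverCount {I : Finset ι} {t : ι → Set α} {f : α → ℝ} {a : α}
    (hcover : f a ≠ 0 → ∃ i ∈ I, a ∈ t i) :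
    ∑ i ∈ I, (t i).indicator (fun b => f b * (coverCount I t b)⁻¹) a = f a := by
  have hsum : ∑ i ∈ I, (t i).indicator (fun b => f b * (coverCount I t b)⁻¹) a
      = coverCount I t a * (f a * (coverCount I t a)⁻¹) := by
    simp only [coverCount, sum_mul]
    refine sum_congr rfl fun i _ => ?_
    by_cases ha : a ∈ t i <;> simp [ha]
  by_cases hfa : f a = 0
  · simp [hsum, hfa]
  · obtain ⟨i, hi, ha⟩ := hcover hfa
    rw [hsum, mul_left_comm, mul_inv_cancel₀ (coverCount_ne_zero hi ha), mul_one]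

theorem MeasureTheory.IntegrableOn.mul_inv_coverCount [MeasurableSpace α] {μ : Measure α}
    {I : Finset ι} {s : Set α} {t : ι → Set α} {f : α → ℝ} (ht : ∀ i ∈ I, MeasurableSet (t i))
    (hf : IntegrableOn f s μ) : IntegrableOn (fun a => f a * (coverCount I t a)⁻¹) s μ :=
  hf.mul_bdd (measurable_coverCount ht).inv.aestronglyMeasurable
    (ae_of_all _ fun a => coverCount_inv_le_one I t a)

theorem sum_setIntegral_mul_inv_coverCount [MeasurableSpace α] {μ : Measure α} {I : Finset ι}
    {s : Set α} {t : ι → Set α} {f : α → ℝ} (hs : MeasurableSet s)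
    (ht : ∀ i ∈ I, MeasurableSet (t i)) (hts : ∀ i ∈ I, t i ⊆ s) (hf : IntegrableOn f s μ)
    (hcover : ∀ a ∈ s, f a ≠ 0 → ∃ i ∈ I, a ∈ t i) :
    ∑ i ∈ I, ∫ a in t i, f a * (coverCount I t a)⁻¹ ∂μ = ∫ a in s, f a ∂μ := by
  have hg := hf.mul_inv_coverCount ht
  calc ∑ i ∈ I, ∫ a in t i, f a * (coverCount I t a)⁻¹ ∂μ
      = ∑ i ∈ I, ∫ a in s, (t i).indicator (fun b => f b * (coverCount I t b)⁻¹) a ∂μ :=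
        sum_congr rfl fun i hi => by
          rw [setIntegral_indicator (ht i hi), Set.inter_eq_right.2 (hts i hi)]
    _ = ∫ a in s, ∑ i ∈ I, (t i).indicator (fun b => f b * (coverCount I t b)⁻¹) a ∂μ :=
        (integral_finsetSum I fun i hi => hg.indicator (ht i hi)).symm
    _ = ∫ a in s, f a ∂μ :=
        setIntegral_congr_fun hs fun a ha => sum_indicator_mul_inv_coverCount (hcover a ha)

end CoverCount

theorem sum_weighted_subdomain_bilinear_forms_eq_global_general {d : ℕ} (K : ℕ)
    (D : Set (Fin d → ℝ)) (hD : MeasurableSet D)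
    (Dk : Fin K → Set (Fin d → ℝ)) (hDkm : ∀ k, MeasurableSet (Dk k))
    (hDk : ∀ k, Dk k ⊆ D)
    (γ : (Fin d → ℝ) → (Fin d → ℝ) → ℝ)
    (hcover : ∀ x y, x ∈ D → y ∈ D → γ x y ≠ 0 → ∃ k, x ∈ Dk k ∧ y ∈ Dk k)
    (u v : (Fin d → ℝ) → ℝ)
    (hint : IntegrableOn
      (fun p : (Fin d → ℝ) × (Fin d → ℝ) =>
        (u p.2 - u p.1) * (v p.2 - v p.1) * γ p.1 p.2) (D ×ˢ D))
    (ζ : (Fin d → ℝ) → (Fin d → ℝ) → ℝ)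
    (hζ : ∀ x y, ζ x y = ∑ k : Fin K,
      (Dk k).indicator (fun _ => (1 : ℝ)) x * (Dk k).indicator (fun _ => (1 : ℝ)) y) :
    ∑ k : Fin K, ∫ x in Dk k, ∫ y in Dk k,
        (u y - u x) * (v y - v x) * γ x y * (ζ x y)⁻¹
      = ∫ x in D, ∫ y in D, (u y - u x) * (v y - v x) * γ x y := by
  set f : (Fin d → ℝ) × (Fin d → ℝ) → ℝ :=
    fun p => (u p.2 - u p.1) * (v p.2 - v p.1) * γ p.1 p.2
  have hζ_count : ∀ x y, ζ x y = coverCount univ (fun k => Dk k ×ˢ Dk k) (x, y) := fun x y => by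
    simp only [hζ, coverCount, Set.indicator_prod_one]
    rfl
  have hf_cover : ∀ p ∈ D ×ˢ D, f p ≠ 0 → ∃ k ∈ univ, p ∈ Dk k ×ˢ Dk k := by
    rintro ⟨x, y⟩ ⟨hx, hy⟩ hfp
    obtain ⟨k, hxk, hyk⟩ := hcover x y hx hy (right_ne_zero_of_mul hfp)
    exact ⟨k, mem_univ k, hxk, hyk⟩
  have hDk_meas : ∀ k ∈ univ, MeasurableSet (Dk k ×ˢ Dk k) := fun k _ => (hDkm k).prod (hDkm k)
  have hDk_sub : ∀ k ∈ univ, Dk k ×ˢ Dk k ⊆ D ×ˢ D := fun k _ => Set.prod_mono (hDk k) (hDk k)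
  calc ∑ k : Fin K, ∫ x in Dk k, ∫ y in Dk k, (u y - u x) * (v y - v x) * γ x y * (ζ x y)⁻¹
      = ∑ k : Fin K, ∫ p in Dk k ×ˢ Dk k,
          f p * (coverCount univ (fun k => Dk k ×ˢ Dk k) p)⁻¹ ∂volume.prod volume :=
        sum_congr rfl fun k hk => by
          simp_rw [hζ_count]
          exact (setIntegral_prod _ ((hint.mono_set (hDk_sub k hk)).mul_inv_coverCount
            hDk_meas)).symm
    _ = ∫ p in D ×ˢ D, f p ∂volume.prod volume :=
        sum_setIntegral_mul_inv_coverCount (hD.prod hD) hDk_meas hDk_sub hint hf_cover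
    _ = ∫ x in D, ∫ y in D, (u y - u x) * (v y - v x) * γ x y := setIntegral_prod f hint

/-- **Equivalence of the sum of weighted subdomain bilinear forms with the global
bilinear form.** If the subsets `D_1, …, D_K` of `D ⊆ ℝ^d` cover the support of the
kernel `γ` in `D × D` and `ζ(x,y) = ∑ k χ_{D_k}(x) χ_{D_k}(y)` is the counting
function, then
`∑ k ∫_{D_k} ∫_{D_k} (u(y)−u(x))(v(y)−v(x)) γ(x,y) ζ(x,y)⁻¹ dy dx
  = ∫_D ∫_D (u(y)−u(x))(v(y)−v(x)) γ(x,y) dy dx`. -/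
theorem sum_weighted_subdomain_bilinear_forms_eq_global {d : ℕ} (K : ℕ)
    (D : Set (Fin d → ℝ)) (hD : MeasurableSet D)
    (Dk : Fin K → Set (Fin d → ℝ)) (hDkm : ∀ k, MeasurableSet (Dk k))
    (hDk : ∀ k, Dk k ⊆ D)
    (γ : (Fin d → ℝ) → (Fin d → ℝ) → ℝ) (hγ : Measurable (Function.uncurry γ))
    (hcover : ∀ x y, x ∈ D → y ∈ D → γ x y ≠ 0 → ∃ k, x ∈ Dk k ∧ y ∈ Dk k)
    (u v : (Fin d → ℝ) → ℝ) (hu : Measurable u) (hv : Measurable v)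
    (hint : IntegrableOn
      (fun p : (Fin d → ℝ) × (Fin d → ℝ) =>
        (u p.2 - u p.1) * (v p.2 - v p.1) * γ p.1 p.2) (D ×ˢ D))
    (ζ : (Fin d → ℝ) → (Fin d → ℝ) → ℝ)
    (hζ : ∀ x y, ζ x y = ∑ k : Fin K,
      (Dk k).indicator (fun _ => (1 : ℝ)) x * (Dk k).indicator (fun _ => (1 : ℝ)) y) :
    ∑ k : Fin K, ∫ x in Dk k, ∫ y in Dk k,
        (u y - u x) * (v y - v x) * γ x y * (ζ x y)⁻¹
      = ∫ x in D, ∫ y in D, (u y - u x) * (v y - v x) * γ x y :=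
  sum_weighted_subdomain_bilinear_forms_eq_global_general K D hD Dk hDkm hDk γ hcover u v hint ζ hζ
end

section
/- Let A be a real symmetric positive semi-definite n×n matrix whose null space is exactly the span of the all-ones vector 𝟙, i.e., A w = 0 if and only if w is a constant vector. Fix an index ℓ and define the modified matrix Ã by Ã_{m i} = A_{m i} for m ≠ ℓ and i ≠ ℓ, Ã_{ℓ ℓ} = 1, and Ã_{ℓ i} = Ã_{i ℓ} = 0 for i ≠ ℓ. Then Ã is symmetric positive definite; in particular Ã is invertible. -/
/-!
For `y := x` with its `ℓ`-th entry set to `0`, the quadratic form of the regularized matrix is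
`x⋆ Ã x = |x ℓ|² + y⋆ A y`. Both terms are nonnegative, and if both vanish then `x ℓ = 0` and
`A y = 0`; a null vector of `A` vanishing at `ℓ` is a constant vector with value `0`, so `x = 0`.
-/

open Matrix Function
open scoped ComplexOrder

namespace Matrix

variable {ι R 𝕜 : Type*} [DecidableEq ι]

def dirichletRegularize [Zero R] [One R] (A : Matrix ι ι R) (ℓ : ι) : Matrix ι ι R :=
  of fun m i => if m = ℓ then (if i = ℓ then 1 else 0) else (if i = ℓ then 0 else A m i)

lemma IsHermitian.dirichletRegularize [NonAssocSemiring R] [StarRing R] {A : Matrix ι ι R}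
    (hA : A.IsHermitian) (ℓ : ι) : (A.dirichletRegularize ℓ).IsHermitian := by
  ext m i
  by_cases hm : m = ℓ <;> by_cases hi : i = ℓ <;>
    simp [Matrix.dirichletRegularize, hm, hi, ← hA.apply i m]

variable [Fintype ι]

lemma dirichletRegularize_mulVec [NonAssocSemiring R] (A : Matrix ι ι R) (ℓ : ι) (x : ι → R) :
    A.dirichletRegularize ℓ *ᵥ x = update (A *ᵥ update x ℓ 0) ℓ (x ℓ) := by
  ext m
  by_cases hm : m = ℓ
  · subst hm
    simp [Matrix.dirichletRegularize, mulVec, dotProduct]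
  · simp only [Matrix.dirichletRegularize, mulVec, dotProduct, of_apply, hm, if_false,
      update_of_ne hm]
    refine Finset.sum_congr rfl fun i _ => ?_
    by_cases hi : i = ℓ <;> simp [hi]

lemma dotProduct_update [NonUnitalNonAssocSemiring R] (u v : ι → R) (ℓ : ι) (a : R) :
    u ⬝ᵥ update v ℓ a = u ℓ * a + update u ℓ 0 ⬝ᵥ v := by
  simp only [dotProduct, update_apply, mul_ite, ite_mul, zero_mul]
  rw [Finset.sum_ite, Finset.sum_ite]
  simp [Finset.filter_eq']

lemma star_dotProduct_dirichletRegularize_mulVec [NonAssocSemiring R] [StarRing R]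
    (A : Matrix ι ι R) (ℓ : ι) (x : ι → R) :
    star x ⬝ᵥ (A.dirichletRegularize ℓ *ᵥ x) =
      star (x ℓ) * x ℓ + star (update x ℓ 0) ⬝ᵥ (A *ᵥ update x ℓ 0) := by
  rw [dirichletRegularize_mulVec, dotProduct_update, ← star_zero, update_star, star_zero]
  rfl

theorem PosSemidef.posDef_dirichletRegularize [RCLike 𝕜] {A : Matrix ι ι 𝕜}
    (hA : A.PosSemidef) (ℓ : ι) (hker : ∀ y, A *ᵥ y = 0 → y ℓ = 0 → y = 0) :
    (A.dirichletRegularize ℓ).PosDef := by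
  refine posDef_iff_dotProduct_mulVec.mpr ⟨hA.isHermitian.dirichletRegularize ℓ, fun x hx => ?_⟩
  rw [star_dotProduct_dirichletRegularize_mulVec]
  set y := update x ℓ 0 with hy
  have hq := hA.dotProduct_mulVec_nonneg y
  refine (add_nonneg (star_mul_self_nonneg _) hq).lt_of_ne' fun h => hx ?_
  obtain ⟨hxℓ, hAy⟩ := (add_eq_zero_iff_of_nonneg (star_mul_self_nonneg _) hq).mp h
  have hy0 : y = 0 := hker y ((hA.dotProduct_mulVec_zero_iff y).mp hAy) (update_self ..)
  have hx_eq : x = update y ℓ (x ℓ) := by rw [hy, update_idem, update_eq_self]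
  rw [hx_eq, hy0, (CStarRing.star_mul_self_eq_zero_iff _).mp hxℓ]
  exact update_eq_self ℓ (0 : ι → 𝕜)

end Matrix

/-- **Regularization of a floating-subdomain stiffness matrix by an artificial
Dirichlet condition.** Let `A` be real symmetric positive semi-definite with null
space exactly the span of the all-ones vector. Replacing the `ℓ`-th row and column
of `A` by the `ℓ`-th standard unit vector yields a symmetric positive definite
(hence invertible) matrix `Ã`. -/
theorem dirichlet_regularized_matrix_posDef {n : ℕ}
    (A : Matrix (Fin n) (Fin n) ℝ) (hpsd : A.PosSemidef)
    (hker : ∀ w : Fin n → ℝ, A.mulVec w = 0 ↔ ∃ c : ℝ, w = fun _ => c)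
    (ℓ : Fin n) :
    (Matrix.of fun m i : Fin n =>
      if m = ℓ then (if i = ℓ then (1 : ℝ) else 0)
      else (if i = ℓ then 0 else A m i)).PosDef := by
  refine hpsd.posDef_dirichletRegularize ℓ fun y hAy hyℓ => ?_
  obtain ⟨c, rfl⟩ := (hker y).mp hAy
  subst hyℓ
  rfl
end
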